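/- Let T_1,…,T_N > 0, c_1,…,c_N > 0 with Σ c_a = 1, ρ > 0, ϱ_a = ρ c_a, τ > 0, and π_a = ϱ_a (T_a − Σ_b c_b T_b)/(τ T_a). Then −Σ_{a=1}^{N} π_a = (1/(2ρτ)) Σ_{a,b=1}^{N} ϱ_a ϱ_b (T_a − T_b)² / (T_a T_b) ≥ 0, i.e. the mixture entropy production due to temperature relaxation equals (1/2) tr(MᵀM) ≥ 0 for the symmetric matrix with entries M_{ab} = √(ϱ_a ϱ_b (T_a−T_b)² / (ρ τ T_a T_b)). -/

import Mathlib

open scoped BigOperators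

/-- The mixture entropy production due to temperature relaxation:
`−Σ_a π_a = (1/(2ρτ)) Σ_{a,b} ϱ_a ϱ_b (T_a − T_b)² / (T_a T_b) ≥ 0`. -/
theorem temperature_relaxation_entropy_production
    (N : ℕ)
    (T c : Fin N → ℝ) (hT : ∀ a, 0 < T a) (hc : ∀ a, 0 < c a)
    (hcsum : ∑ a, c a = 1)
    (ρ τ : ℝ) (hρ : 0 < ρ) (hτ : 0 < τ)
    (ϱ : Fin N → ℝ) (hϱ : ∀ a, ϱ a = ρ * c a)
    (π : Fin N → ℝ)
    (hπ : ∀ a, π a = ϱ a * (T a - ∑ b, c b * T b) / (τ * T a)) :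
    -∑ a, π a
      = (1 / (2 * ρ * τ)) * ∑ a, ∑ b, ϱ a * ϱ b * (T a - T b) ^ 2 / (T a * T b)
    ∧ 0 ≤ -∑ a, π a := by
  have hT0 : ∀ a, T a ≠ 0 := fun a => (hT a).ne'
  set Tb := ∑ b, c b * T b with hTb
  set S := ∑ a, c a / T a with hS
  have L : -∑ a, π a = (ρ / τ) * (Tb * S) - ρ / τ := by
    have h1 : ∀ a : Fin N, -π a = (ρ / τ * Tb) * (c a / T a) - (ρ / τ) * c a := by
      intro a
      have hTa := hT0 a
      rw [hπ a, hϱ a]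
      field_simp
      ring
    rw [← Finset.sum_neg_distrib]
    simp only [h1]
    rw [Finset.sum_sub_distrib, ← Finset.mul_sum, ← Finset.mul_sum, ← hS, hcsum]
    ring
  have R : ∑ a, ∑ b, ϱ a * ϱ b * (T a - T b) ^ 2 / (T a * T b)
      = 2 * ρ ^ 2 * (Tb * S) - 2 * ρ ^ 2 := by
    have h2 : ∀ a b : Fin N, ϱ a * ϱ b * (T a - T b) ^ 2 / (T a * T b)
        = ρ ^ 2 * ((c a * T a) * (c b / T b)) + ρ ^ 2 * ((c a / T a) * (c b * T b))
          - 2 * ρ ^ 2 * (c a * c b) := by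
      intro a b
      have hTa := hT0 a; have hTb' := hT0 b
      rw [hϱ a, hϱ b]
      field_simp
      ring
    simp only [h2]
    simp only [Finset.sum_sub_distrib, Finset.sum_add_distrib, ← Finset.mul_sum,
      ← Finset.sum_mul]
    rw [← hTb, ← hS, hcsum]
    ring
  have key : -∑ a, π a
      = (1 / (2 * ρ * τ)) * ∑ a, ∑ b, ϱ a * ϱ b * (T a - T b) ^ 2 / (T a * T b) := by
    rw [L, R]
    field_simp
  refine ⟨key, ?_⟩
  rw [key]
  apply mul_nonneg (by positivity)
  apply Finset.sum_nonneg
  intro a _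
  apply Finset.sum_nonneg
  intro b _
  have ha := hc a; have hb := hc b; have hTa := hT a; have hTb' := hT b
  rw [hϱ a, hϱ b]
  positivity
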